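/- arXiv:1011.3208 — 4 statements merged into one kernel-verified Lean document; each statement's English description precedes it below -/
import Mathlib

section
/- Let G = (V, E) be a finite simple graph, let p be a generic configuration of G in ℝ^d such that the framework (G, p) is infinitesimally rigid, and let e ∈ E. Then the framework (G − e, p), where G − e is G with the edge e deleted, is infinitesimally rigid if and only if for every r ∈ ℝ there exists an equilibrium stress ω of (G, p) with ω(e) = r (equivalently, if and only if there exists an equilibrium stress ω of (G, p) with ω(e) ≠ 0). -/
open scoped Classical

noncomputable section

/-- Two configurations are equivalent if corresponding edge lengths agree. -/
def Equivalent {d : ℕ} {V : Type*} (G : SimpleGraph V)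
    (p q : V → EuclideanSpace ℝ (Fin d)) : Prop :=
  ∀ u v, G.Adj u v → ‖p u - p v‖ = ‖q u - q v‖

/-- Two configurations are congruent if all pairwise distances agree. -/
def ConfigCongruent {d : ℕ} {V : Type*} (p q : V → EuclideanSpace ℝ (Fin d)) : Prop :=
  ∀ u v, ‖p u - p v‖ = ‖q u - q v‖

/-- A configuration is generic if the coordinates of its points are
algebraically independent over `ℚ`. -/
def Generic {d : ℕ} {V : Type*} (p : V → EuclideanSpace ℝ (Fin d)) : Prop :=
  AlgebraicIndependent ℚ (fun x : V × Fin d => p x.1 x.2)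

/-- A framework `(G, p)` is locally rigid if all equivalent configurations
sufficiently close to `p` are congruent to `p`. -/
def LocallyRigid {d : ℕ} {V : Type*} (G : SimpleGraph V)
    (p : V → EuclideanSpace ℝ (Fin d)) : Prop :=
  ∃ ε > 0, ∀ q, Equivalent G p q → (∀ v, ‖q v - p v‖ < ε) → ConfigCongruent p q

/-- Generic local rigidity in `ℝ^d`. -/
def GLR (d : ℕ) {V : Type*} (G : SimpleGraph V) : Prop :=
  ∀ p : V → EuclideanSpace ℝ (Fin d), Generic p → LocallyRigid G p

/-- Generic global rigidity in `ℝ^d`. -/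
def GGR (d : ℕ) {V : Type*} (G : SimpleGraph V) : Prop :=
  ∀ p : V → EuclideanSpace ℝ (Fin d), Generic p →
    ∀ q, Equivalent G p q → ConfigCongruent p q

/-- Generic redundant rigidity in `ℝ^d`: deleting any edge leaves a GLR graph. -/
def GRR (d : ℕ) {V : Type*} (G : SimpleGraph V) : Prop :=
  ∀ e ∈ G.edgeSet, GLR d (G.deleteEdges {e})

/-- `G` is `k`-connected: at least `k+1` vertices, and removing any at most
`k-1` vertices leaves a connected induced subgraph. -/
def KConnected (k : ℕ) {V : Type*} [Fintype V] (G : SimpleGraph V) : Prop :=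
  k + 1 ≤ Fintype.card V ∧
    ∀ S : Finset V, S.card ≤ k - 1 → (G.induce ((↑S : Set V)ᶜ)).Connected

/-- The join `G + H` of two graphs: all edges of `G`, all edges of `H`, and
all cross edges. -/
def graphJoin {α β : Type*} (G : SimpleGraph α) (H : SimpleGraph β) :
    SimpleGraph (α ⊕ β) :=
  SimpleGraph.fromRel (fun x y =>
    (∃ a b, x = Sum.inl a ∧ y = Sum.inl b ∧ G.Adj a b) ∨
    (∃ a b, x = Sum.inr a ∧ y = Sum.inr b ∧ H.Adj a b) ∨
    (x.isLeft ∧ y.isRight))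

/-- The disjoint union `G ∪ H` of two graphs. -/
def disjUnion {α β : Type*} (G : SimpleGraph α) (H : SimpleGraph β) :
    SimpleGraph (α ⊕ β) :=
  SimpleGraph.fromRel (fun x y =>
    (∃ a b, x = Sum.inl a ∧ y = Sum.inl b ∧ G.Adj a b) ∨
    (∃ a b, x = Sum.inr a ∧ y = Sum.inr b ∧ H.Adj a b))

/-- Apply a `d × d` matrix to a point of `ℝ^d`. -/
def matApply {d : ℕ} (A : Matrix (Fin d) (Fin d) ℝ)
    (x : EuclideanSpace ℝ (Fin d)) : EuclideanSpace ℝ (Fin d) :=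
  WithLp.toLp 2 (fun i => ∑ j, A i j * x j)

/-- An infinitesimal motion of a framework. -/
def IsInfinitesimalMotion {d : ℕ} {V : Type*} (G : SimpleGraph V)
    (p p' : V → EuclideanSpace ℝ (Fin d)) : Prop :=
  ∀ u v, G.Adj u v → inner ℝ (p u - p v) (p' u - p' v) = (0 : ℝ)

/-- A trivial motion: `p' v = S (p v) + b` for a skew-symmetric matrix `S`. -/
def IsTrivialMotion {d : ℕ} {V : Type*}
    (p p' : V → EuclideanSpace ℝ (Fin d)) : Prop :=
  ∃ (S : Matrix (Fin d) (Fin d) ℝ) (b : EuclideanSpace ℝ (Fin d)),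
    S.transpose = -S ∧ ∀ v, p' v = matApply S (p v) + b

/-- A framework is infinitesimally rigid if every infinitesimal motion is trivial. -/
def InfinitesimallyRigid {d : ℕ} {V : Type*} (G : SimpleGraph V)
    (p : V → EuclideanSpace ℝ (Fin d)) : Prop :=
  ∀ p', IsInfinitesimalMotion G p p' → IsTrivialMotion p p'

/-- An equilibrium stress: a real number on each edge (zero off edges) with the
equilibrium condition at each vertex. -/
def IsEquilibriumStress {d : ℕ} {V : Type*} [Fintype V] (G : SimpleGraph V)
    (p : V → EuclideanSpace ℝ (Fin d)) (ω : Sym2 V → ℝ) : Prop :=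
  (∀ e, e ∉ G.edgeSet → ω e = 0) ∧
  ∀ v, ∑ u ∈ G.neighborFinset v, ω s(u, v) • (p v - p u) = 0

/-- The point `x` lies on the quadric `(A, c, D)`:
`xᵀ A x + 2⟨c, x⟩ + D = 0`. -/
def OnQuadric {d : ℕ} (A : Matrix (Fin d) (Fin d) ℝ) (c : EuclideanSpace ℝ (Fin d))
    (D : ℝ) (x : EuclideanSpace ℝ (Fin d)) : Prop :=
  (∑ i, ∑ j, x i * A i j * x j) + 2 * (∑ i, c i * x i) + D = 0

/-- The polarized quadric constraint for a pair of points: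
`xᵀ A y + ⟨c, x + y⟩ + D = 0`. -/
def PolarConstraint {d : ℕ} (A : Matrix (Fin d) (Fin d) ℝ)
    (c : EuclideanSpace ℝ (Fin d)) (D : ℝ) (x y : EuclideanSpace ℝ (Fin d)) : Prop :=
  (∑ i, ∑ j, x i * A i j * y j) + (∑ i, c i * (x i + y i)) + D = 0

/-!
The rows of the rigidity matrix are the edge functionals `φ_uv x = ⟨p u - p v, x u - x v⟩`, and
an equilibrium stress is exactly a linear dependence `∑ ω_e φ_e = 0` among them: the stress
condition at `v` is the coefficient of `x v`. The motions of `G - e` are those of `G` exactly when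
they are killed by `φ_e`, i.e. when `φ_e` lies in the span of the other rows, i.e. when some
dependence has a nonzero coefficient on `e`; rescaling it gives every value on `e`.
-/

open Finset Matrix

namespace SimpleGraph

variable {V M : Type*} [Fintype V] [AddCommMonoid M] (G : SimpleGraph V) [DecidableRel G.Adj]

theorem sum_sum_neighborFinset_eq_sum_edgeFinset [DecidableEq V] (f : V → V → M) :
    ∑ v, ∑ u ∈ G.neighborFinset v, f v u =
      ∑ e ∈ G.edgeFinset, Sym2.lift ⟨fun a b ↦ f a b + f b a, fun _ _ ↦ add_comm _ _⟩ e := by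
  have hmaps : ∀ z ∈ ({z | G.Adj z.1 z.2} : Finset (V × V)), s(z.1, z.2) ∈ G.edgeFinset := by
    simp
  rw [← sum_finset_product' ({z | G.Adj z.1 z.2} : Finset (V × V)) _ _ (by simp),
    ← sum_fiberwise_of_maps_to hmaps]
  refine sum_congr rfl fun e he ↦ ?_
  induction e using Sym2.ind with
  | _ a b =>
  have hab : G.Adj a b := by simpa using he
  have hfiber : ({z ∈ ({z | G.Adj z.1 z.2} : Finset (V × V)) | s(z.1, z.2) = s(a, b)}) =
      {(a, b), (b, a)} := by
    ext ⟨x, y⟩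
    simp only [mem_filter, mem_univ, true_and, Sym2.eq_iff, mem_insert, mem_singleton,
      Prod.mk.injEq]
    constructor
    · exact fun h ↦ h.2
    · rintro (⟨rfl, rfl⟩ | ⟨rfl, rfl⟩)
      · simp [hab]
      · simp [hab.symm]
  rw [hfiber, sum_pair (by simp [hab.ne]), Sym2.lift_mk]

end SimpleGraph

theorem Matrix.dotProduct_mulVec_eq_zero_of_transpose_eq_neg {n R : Type*} [Fintype n] [CommRing R]
    [NoZeroDivisors R] [CharZero R] {S : Matrix n n R} (hS : S.transpose = -S) (y : n → R) :
    y ⬝ᵥ S *ᵥ y = 0 := by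
  have h : y ⬝ᵥ S *ᵥ y = -(y ⬝ᵥ S *ᵥ y) := by
    conv_lhs => rw [dotProduct_mulVec, ← mulVec_transpose, hS]
    rw [neg_mulVec, neg_dotProduct, dotProduct_comm]
  exact self_eq_neg.mp h

theorem inner_matApply_self_eq_zero {d : ℕ} {S : Matrix (Fin d) (Fin d) ℝ} (hS : S.transpose = -S)
    (y : EuclideanSpace ℝ (Fin d)) : inner ℝ y (matApply S y) = (0 : ℝ) := by
  rw [EuclideanSpace.inner_eq_star_dotProduct, star_trivial, dotProduct_comm]
  exact Matrix.dotProduct_mulVec_eq_zero_of_transpose_eq_neg hS y.ofLp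

theorem matApply_sub {d : ℕ} (S : Matrix (Fin d) (Fin d) ℝ) (x y : EuclideanSpace ℝ (Fin d)) :
    matApply S x - matApply S y = matApply S (x - y) := by
  ext i
  simp [matApply, mul_sub, sum_sub_distrib]

section Rigidity

variable {d : ℕ} {V : Type*} {G : SimpleGraph V} {p x : V → EuclideanSpace ℝ (Fin d)}

theorem forall_sum_inner_eq_zero_iff {ι E : Type*} [Fintype ι] [NormedAddCommGroup E]
    [InnerProductSpace ℝ E] (F : ι → E) :
    (∀ x : ι → E, ∑ i, inner ℝ (F i) (x i) = (0 : ℝ)) ↔ ∀ i, F i = 0 := by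
  refine ⟨fun h i ↦ ?_, fun h x ↦ by simp [h]⟩
  classical
  have hi := h (Pi.single i (F i))
  rw [Fintype.sum_eq_single i fun j hj ↦ by rw [Pi.single_eq_of_ne hj, inner_zero_right],
    Pi.single_eq_same, inner_self_eq_zero] at hi
  exact hi

variable (p) in
/-- The row of the rigidity matrix belonging to an edge. -/
def edgeFunctional : Sym2 V → (V → EuclideanSpace ℝ (Fin d)) →ₗ[ℝ] ℝ :=
  Sym2.lift ⟨fun u v ↦ innerₛₗ ℝ (p u - p v) ∘ₗ
    (LinearMap.proj (R := ℝ) (φ := fun _ ↦ EuclideanSpace ℝ (Fin d)) u - LinearMap.proj v),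
    fun u v ↦ by
      ext x
      change inner ℝ (p u - p v) (x u - x v) = inner ℝ (p v - p u) (x v - x u)
      rw [← neg_sub (p v), ← neg_sub (x v), inner_neg_neg]⟩

theorem edgeFunctional_mk (u v : V) :
    edgeFunctional p s(u, v) x = inner ℝ (p u - p v) (x u - x v) := by
  rw [edgeFunctional, Sym2.lift_mk]
  rfl

theorem isInfinitesimalMotion_iff :
    IsInfinitesimalMotion G p x ↔ ∀ e ∈ G.edgeSet, edgeFunctional p e x = 0 :=
  ⟨fun h e he ↦ by
    induction e using Sym2.ind with | _ u v => rw [edgeFunctional_mk]; exact h u v he,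
    fun h u v huv ↦ edgeFunctional_mk u v ▸ h s(u, v) huv⟩

theorem IsTrivialMotion.edgeFunctional_eq_zero (h : IsTrivialMotion p x) (e : Sym2 V) :
    edgeFunctional p e x = 0 := by
  obtain ⟨S, b, hS, hx⟩ := h
  induction e using Sym2.ind with
  | _ u v =>
    rw [edgeFunctional_mk, hx, hx, add_sub_add_right_eq_sub, matApply_sub]
    exact inner_matApply_self_eq_zero hS _

variable [Fintype V]

theorem sum_edgeFinset_mul_edgeFunctional (ω : Sym2 V → ℝ) (x : V → EuclideanSpace ℝ (Fin d)) :
    ∑ e ∈ G.edgeFinset, ω e * edgeFunctional p e x =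
      ∑ v, inner ℝ (∑ u ∈ G.neighborFinset v, ω s(u, v) • (p v - p u)) (x v) := by
  simp only [sum_inner, real_inner_smul_left]
  rw [G.sum_sum_neighborFinset_eq_sum_edgeFinset]
  refine sum_congr rfl fun e _ ↦ ?_
  induction e using Sym2.ind with
  | _ a b =>
    simp only [Sym2.lift_mk, edgeFunctional_mk, Sym2.eq_swap (a := b)]
    rw [inner_sub_right, ← neg_sub (p a), inner_neg_left]
    ring

theorem isEquilibriumStress_iff {ω : Sym2 V → ℝ} :
    IsEquilibriumStress G p ω ↔
      (∀ e, e ∉ G.edgeSet → ω e = 0) ∧ ∑ e ∈ G.edgeFinset, ω e • edgeFunctional p e = 0 := by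
  refine and_congr_right fun _ ↦ ?_
  simp only [LinearMap.ext_iff, LinearMap.sum_apply, LinearMap.smul_apply, smul_eq_mul,
    LinearMap.zero_apply, sum_edgeFinset_mul_edgeFunctional, forall_sum_inner_eq_zero_iff]

theorem IsEquilibriumStress.smul {ω : Sym2 V → ℝ} (hω : IsEquilibriumStress G p ω) (r : ℝ) :
    IsEquilibriumStress G p (r • ω) := by
  rw [isEquilibriumStress_iff] at hω ⊢
  refine ⟨fun e he ↦ by simp [hω.1 e he], ?_⟩
  simp only [Pi.smul_apply, smul_eq_mul, mul_smul, ← smul_sum, hω.2, smul_zero]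

theorem IsEquilibriumStress.edgeFunctional_eq_zero {ω : Sym2 V → ℝ} {e : Sym2 V}
    (hω : IsEquilibriumStress G p ω) (hωe : ω e ≠ 0)
    (hx : ∀ e' ∈ G.edgeSet \ {e}, edgeFunctional p e' x = 0) : edgeFunctional p e x = 0 := by
  have he : e ∈ G.edgeFinset := G.mem_edgeFinset.2 <| not_not.1 (mt (hω.1 e) hωe)
  have hsum : ∑ e' ∈ G.edgeFinset, ω e' * edgeFunctional p e' x = 0 := by
    simp [sum_edgeFinset_mul_edgeFunctional, hω.2]
  rw [sum_eq_single_of_mem e he fun e' he' hne ↦ by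
    rw [hx e' ⟨G.mem_edgeFinset.1 he', hne⟩, mul_zero]] at hsum
  exact (mul_eq_zero.1 hsum).resolve_left hωe

theorem InfinitesimallyRigid.deleteEdges_of_isEquilibriumStress {ω : Sym2 V → ℝ} {e : Sym2 V}
    (hrig : InfinitesimallyRigid G p) (hω : IsEquilibriumStress G p ω) (hωe : ω e ≠ 0) :
    InfinitesimallyRigid (G.deleteEdges {e}) p := by
  intro x hx
  rw [isInfinitesimalMotion_iff, SimpleGraph.edgeSet_deleteEdges] at hx
  refine hrig x (isInfinitesimalMotion_iff.2 fun e' he' ↦ ?_)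
  obtain rfl | hne := eq_or_ne e' e
  · exact hω.edgeFunctional_eq_zero hωe hx
  · exact hx e' ⟨he', hne⟩

theorem InfinitesimallyRigid.edgeFunctional_mem_span (hrig : InfinitesimallyRigid G p)
    (e : Sym2 V) : edgeFunctional p e ∈ Submodule.span ℝ (edgeFunctional p '' G.edgeSet) := by
  rw [Set.image_eq_range]
  refine mem_span_of_iInf_ker_le_ker fun x hx ↦ ?_
  simp only [Submodule.mem_iInf, LinearMap.mem_ker] at hx
  exact (hrig x (isInfinitesimalMotion_iff.2 fun e' he' ↦ hx ⟨e', he'⟩)).edgeFunctional_eq_zero e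

theorem exists_isEquilibriumStress_of_mem_span {e : Sym2 V} (he : e ∈ G.edgeSet)
    (h : edgeFunctional p e ∈ Submodule.span ℝ (edgeFunctional p '' (G.edgeSet \ {e}))) :
    ∃ ω, IsEquilibriumStress G p ω ∧ ω e = 1 := by
  obtain ⟨l, hl, hle⟩ := (Finsupp.mem_span_image_iff_linearCombination ℝ).1 h
  have hsupp : Finsupp.single e 1 - l ∈ Finsupp.supported ℝ ℝ (G.edgeFinset : Set (Sym2 V)) := by
    rw [SimpleGraph.coe_edgeFinset]
    exact sub_mem (Finsupp.single_mem_supported ℝ 1 he)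
      (Finsupp.supported_mono Set.sdiff_subset hl)
  refine ⟨(Finsupp.single e 1 - l : Sym2 V →₀ ℝ),
    isEquilibriumStress_iff.2 ⟨fun e' he' ↦ ?_, ?_⟩, ?_⟩
  · exact Finsupp.notMem_support_iff.1 fun h' ↦ he' (by simpa using hsupp h')
  · rw [← Finsupp.linearCombination_apply_of_mem_supported ℝ hsupp, map_sub, hle,
      Finsupp.linearCombination_single, one_smul, sub_self]
  · have hl_e : l e = 0 := Finsupp.notMem_support_iff.1 fun h' ↦ (hl h').2 rfl
    simp [hl_e]

theorem InfinitesimallyRigid.exists_isEquilibriumStress_apply_eq {e : Sym2 V}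
    (h : InfinitesimallyRigid (G.deleteEdges {e}) p) (he : e ∈ G.edgeSet) (r : ℝ) :
    ∃ ω, IsEquilibriumStress G p ω ∧ ω e = r := by
  have hspan := h.edgeFunctional_mem_span e
  rw [SimpleGraph.edgeSet_deleteEdges] at hspan
  obtain ⟨ω, hω, hωe⟩ := exists_isEquilibriumStress_of_mem_span he hspan
  exact ⟨r • ω, hω.smul r, by simp [hωe]⟩

end Rigidity

theorem redundant_edge_iff_stress_general {V : Type*} [Fintype V] (d : ℕ)
    (G : SimpleGraph V) (p : V → EuclideanSpace ℝ (Fin d))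
    (hrig : InfinitesimallyRigid G p) (e : Sym2 V) (he : e ∈ G.edgeSet) :
    (InfinitesimallyRigid (G.deleteEdges {e}) p ↔
      ∀ r : ℝ, ∃ ω, IsEquilibriumStress G p ω ∧ ω e = r) ∧
    (InfinitesimallyRigid (G.deleteEdges {e}) p ↔
      ∃ ω, IsEquilibriumStress G p ω ∧ ω e ≠ 0) := by
  have rigid_of_stress : (∃ ω, IsEquilibriumStress G p ω ∧ ω e ≠ 0) →
      InfinitesimallyRigid (G.deleteEdges {e}) p :=
    fun ⟨_, hω, hωe⟩ ↦ hrig.deleteEdges_of_isEquilibriumStress hω hωe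
  have stress_ne_zero (h : ∀ r : ℝ, ∃ ω, IsEquilibriumStress G p ω ∧ ω e = r) :
      ∃ ω, IsEquilibriumStress G p ω ∧ ω e ≠ 0 :=
    let ⟨ω, hω, hωe⟩ := h 1
    ⟨ω, hω, hωe ▸ one_ne_zero⟩
  have stress_of_rigid (h : InfinitesimallyRigid (G.deleteEdges {e}) p) :=
    h.exists_isEquilibriumStress_apply_eq he
  exact ⟨⟨stress_of_rigid, rigid_of_stress ∘ stress_ne_zero⟩,
    ⟨stress_ne_zero ∘ stress_of_rigid, rigid_of_stress⟩⟩

/-- Proposition (Frank–Jiang): for a generic infinitesimally rigid framework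
`(G, p)` and an edge `e`, the framework `(G - e, p)` is infinitesimally rigid
iff every real number is attained on `e` by some equilibrium stress, and
equivalently iff some equilibrium stress is nonzero on `e`. -/
theorem redundant_edge_iff_stress {V : Type*} [Fintype V] (d : ℕ)
    (G : SimpleGraph V) (p : V → EuclideanSpace ℝ (Fin d)) (hp : Generic p)
    (hrig : InfinitesimallyRigid G p) (e : Sym2 V) (he : e ∈ G.edgeSet) :
    (InfinitesimallyRigid (G.deleteEdges {e}) p ↔
      ∀ r : ℝ, ∃ ω, IsEquilibriumStress G p ω ∧ ω e = r) ∧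
    (InfinitesimallyRigid (G.deleteEdges {e}) p ↔
      ∃ ω, IsEquilibriumStress G p ω ∧ ω e ≠ 0) :=
  redundant_edge_iff_stress_general d G p hrig e he

end
end

section
/- Let a, b ≥ d + 2 and suppose the complete bipartite graph K_{a,b} is generically locally rigid in ℝ^d. Then K_{a,b} is generically redundantly rigid in ℝ^d: for every edge e of K_{a,b}, the graph K_{a,b} − e is generically locally rigid in ℝ^d. -/
open scoped Classical

noncomputable section

/-!
Let `p` be generic and let `q` be close to `p` with the same edge lengths on `K_{a,b} - i₀j₀`.
Choose `d + 1` vertices `σ` on the side of `i₀` and `d + 1` vertices `τ` on the side of `j₀`,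
avoiding `i₀` and `j₀`. Affine independence is an open condition, so the points `q ∘ σ` are
affinely independent like `p ∘ σ`, and `q i₀ = ∑ λₖ q (σ k)` with `∑ λₖ = 1`. For every vertex `j`
on the other side, the combination of length defects
`(‖q i₀ - q j‖² - ‖p i₀ - p j‖²) - ∑ λₖ (‖q (σ k) - q j‖² - ‖p (σ k) - p j‖²)`
is an affine function of `p j` alone. It vanishes at the affinely spanning points `p ∘ τ`, hence
also at `p j₀`, so `q` also preserves the length of the deleted edge and the local rigidity of
`K_{a,b}` applies.
-/

open Finset in
lemma exists_sum_eq_one_of_affineSpan_eq_top {k E ι : Type*} [Ring k] [AddCommGroup E]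
    [Module k E] [Fintype ι] {x : ι → E} (hx : affineSpan k (Set.range x) = ⊤) (z : E) :
    ∃ w : ι → k, ∑ i, w i = 1 ∧ z = ∑ i, w i • x i := by
  obtain ⟨w, hw, rfl⟩ :=
    eq_affineCombination_of_mem_affineSpan_of_fintype (hx ▸ AffineSubspace.mem_top k E z)
  exact ⟨w, hw, univ.affineCombination_eq_linear_combination x w hw⟩

section
variable {E ι κ : Type*} [NormedAddCommGroup E] [InnerProductSpace ℝ E]
  [Fintype ι] [Fintype κ]

open Finset RealInnerProductSpace

lemma sum_smul_inner (w : ι → ℝ) (x : ι → E) (v : E) :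
    ∑ i, w i * ⟪x i, v⟫ = ⟪∑ i, w i • x i, v⟫ := by
  simp [sum_inner, inner_smul_left]

lemma sq_norm_sub_sub_sum_sq_norm_sub (x x' : ι → E) {w : ι → ℝ} (hw : ∑ i, w i = 1)
    (s s' : E) (hs' : s' = ∑ i, w i • x' i) (v v' : E) :
    (‖s' - v'‖ ^ 2 - ‖s - v‖ ^ 2) - ∑ i, w i * (‖x' i - v'‖ ^ 2 - ‖x i - v‖ ^ 2) =
      (‖s'‖ ^ 2 - ‖s‖ ^ 2) - ∑ i, w i * (‖x' i‖ ^ 2 - ‖x i‖ ^ 2)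
        + 2 * ⟪s - ∑ i, w i • x i, v⟫ := by
  have h1 : ∑ i, w i * ⟪x' i, v'⟫ = ⟪s', v'⟫ := by rw [hs', sum_smul_inner]
  have h2 := sum_smul_inner w x v
  simp only [norm_sub_sq_real, inner_sub_left, mul_sub, mul_add, sum_sub_distrib,
    sum_add_distrib, ← sum_mul, hw]
  simp only [mul_left_comm _ (2 : ℝ), ← mul_sum, h1, h2]
  ring

lemma add_inner_eq_zero_of_affineSpan_eq_top {y : κ → E} (hy : affineSpan ℝ (Set.range y) = ⊤)
    {c : ℝ} {u : E} (h : ∀ m, c + ⟪u, y m⟫ = 0) (t : E) : c + ⟪u, t⟫ = 0 := by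
  obtain ⟨μ, hμ, rfl⟩ := exists_sum_eq_one_of_affineSpan_eq_top hy t
  calc c + ⟪u, ∑ m, μ m • y m⟫ = ∑ m, μ m * (c + ⟪u, y m⟫) := by
        simp only [inner_sum, inner_smul_right, mul_add, sum_add_distrib, ← sum_mul, hμ,
          one_mul]
    _ = 0 := by simp [h]

theorem norm_sub_eq_of_affineSpan_eq_top {x x' : ι → E} {y y' : κ → E} {s s' t t' : E}
    (hx' : affineSpan ℝ (Set.range x') = ⊤) (hy : affineSpan ℝ (Set.range y) = ⊤)
    (hxy : ∀ i m, ‖x i - y m‖ = ‖x' i - y' m‖) (hxt : ∀ i, ‖x i - t‖ = ‖x' i - t'‖)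
    (hsy : ∀ m, ‖s - y m‖ = ‖s' - y' m‖) :
    ‖s - t‖ = ‖s' - t'‖ := by
  obtain ⟨w, hw, hs'⟩ := exists_sum_eq_one_of_affineSpan_eq_top hx' s'
  have hdefect := sq_norm_sub_sub_sum_sq_norm_sub x x' hw s s' hs'
  set c := (‖s'‖ ^ 2 - ‖s‖ ^ 2) - ∑ i, w i * (‖x' i‖ ^ 2 - ‖x i‖ ^ 2)
  set u := (2 : ℝ) • (s - ∑ i, w i • x i)
  have hvanish : ∀ m, c + ⟪u, y m⟫ = 0 := fun m => by
    simpa [u, hsy, hxy, real_inner_smul_left] using (hdefect (y m) (y' m)).symm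
  have hsq : ‖s - t‖ ^ 2 = ‖s' - t'‖ ^ 2 := by
    have := (hdefect t t').trans (by simpa [u, real_inner_smul_left] using
      add_inner_eq_zero_of_affineSpan_eq_top hy hvanish t)
    simpa [hxt, sub_eq_zero, eq_comm] using this
  exact (sq_eq_sq₀ (norm_nonneg _) (norm_nonneg _)).mp hsq

end

open MvPolynomial in
theorem affineIndependent_of_algebraicIndependent {d : ℕ}
    {x : Fin (d + 1) → EuclideanSpace ℝ (Fin d)}
    (hx : AlgebraicIndependent ℚ fun ki : Fin (d + 1) × Fin d => x ki.1 ki.2) :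
    AffineIndependent ℝ x := by
  let P : Matrix (Fin d) (Fin d) (MvPolynomial (Fin (d + 1) × Fin d) ℚ) :=
    Matrix.of fun k i => X (k.succ, i) - X (0, i)
  have hP : P.det ≠ 0 := by
    -- at `x 0 = 0` and `x (k + 1) =` the `k`-th unit vector, `P` specializes to the identity
    let e : Fin (d + 1) × Fin d → ℚ := fun ki => if ki.1 = ki.2.succ then 1 else 0
    have hPe : (eval e).mapMatrix P = 1 := by
      ext k i
      simp [e, P, Matrix.one_apply, Fin.succ_ne_zero, eq_comm]
    intro h
    have := congrArg Matrix.det hPe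
    rw [← RingHom.map_det, h, map_zero, Matrix.det_one] at this
    exact zero_ne_one this
  have hdet : (Matrix.of fun k i => x k.succ i - x 0 i).det ≠ 0 := by
    intro h
    apply hP
    apply hx
    rw [map_zero, AlgHom.map_det]
    convert h
    ext k i
    simp [P]
  have hrows : LinearIndependent ℝ fun (k : Fin d) (i : Fin d) => x k.succ i - x 0 i :=
    Matrix.linearIndependent_rows_of_det_ne_zero hdet
  rw [affineIndependent_iff_linearIndependent_vsub ℝ x 0,
    ← linearIndependent_equiv (finSuccAboveEquiv 0)]
  convert hrows.map' (WithLp.linearEquiv 2 ℝ (Fin d → ℝ)).symm.toLinearMap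
    (LinearEquiv.ker _) using 1
  ext k i
  simp [finSuccAboveEquiv_apply]

theorem Generic.affineIndependent_comp {d : ℕ} {V : Type*} {p : V → EuclideanSpace ℝ (Fin d)}
    (hp : Generic p) {σ : Fin (d + 1) → V} (hσ : Function.Injective σ) :
    AffineIndependent ℝ (p ∘ σ) :=
  affineIndependent_of_algebraicIndependent <|
    hp.comp (Prod.map σ id) (hσ.prodMap Function.injective_id)

theorem AffineIndependent.exists_pos_forall_norm_sub_lt {ι E : Type*} [Fintype ι]
    [NormedAddCommGroup E] [NormedSpace ℝ E] [FiniteDimensional ℝ E] {x : ι → E}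
    (hx : AffineIndependent ℝ x) :
    ∃ ε > 0, ∀ y : ι → E, (∀ i, ‖y i - x i‖ < ε) → AffineIndependent ℝ y := by
  obtain ⟨ε, hε, hball⟩ := Metric.isOpen_iff.mp isOpen_setOfPred_affineIndependent x hx
  refine ⟨ε, hε, fun y hy => hball <| (dist_pi_lt_iff hε).mpr fun i => ?_⟩
  rw [dist_eq_norm]
  exact hy i

theorem AffineIndependent.affineSpan_eq_top_of_euclideanSpace {d : ℕ}
    {x : Fin (d + 1) → EuclideanSpace ℝ (Fin d)} (hx : AffineIndependent ℝ x) :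
    affineSpan ℝ (Set.range x) = ⊤ :=
  hx.affineSpan_eq_top_iff_card_eq_finrank_add_one.mpr (by simp)

theorem exists_injective_forall_ne {α : Type*} [Fintype α] {n : ℕ}
    (h : n + 1 ≤ Fintype.card α) (a : α) :
    ∃ σ : Fin n → α, Function.Injective σ ∧ ∀ k, σ k ≠ a := by
  have hcard : Fintype.card (Fin n) ≤ Fintype.card {x // x ≠ a} := by
    rw [Fintype.card_fin, Fintype.card_subtype_compl, Fintype.card_subtype_eq]
    omega
  obtain ⟨f⟩ := Function.Embedding.nonempty_of_card_le hcard
  exact ⟨fun k => f k, Subtype.val_injective.comp f.injective, fun k => (f k).2⟩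

theorem Equivalent.of_deleteEdges {d : ℕ} {V : Type*} {G : SimpleGraph V}
    {p q : V → EuclideanSpace ℝ (Fin d)} {u v : V}
    (h : Equivalent (G.deleteEdges {s(u, v)}) p q) (huv : ‖p u - p v‖ = ‖q u - q v‖) :
    Equivalent G p q := by
  intro x y hxy
  by_cases he : s(x, y) = s(u, v)
  · rcases Sym2.eq_iff.mp he with ⟨rfl, rfl⟩ | ⟨rfl, rfl⟩
    · exact huv
    · rw [norm_sub_rev, huv, norm_sub_rev]
  · exact h x y (by simp [hxy, he])

theorem GLR.deleteEdges_completeBipartiteGraph {d : ℕ} {α β : Type*} [Fintype α] [Fintype β]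
    (hα : d + 2 ≤ Fintype.card α) (hβ : d + 2 ≤ Fintype.card β)
    (h : GLR d (completeBipartiteGraph α β)) (i₀ : α) (j₀ : β) :
    GLR d ((completeBipartiteGraph α β).deleteEdges {s(Sum.inl i₀, Sum.inr j₀)}) := by
  intro p hp
  obtain ⟨ε₀, hε₀, hrigid⟩ := h p hp
  obtain ⟨σ, hσ, hσi₀⟩ := exists_injective_forall_ne (n := d + 1) hα i₀
  obtain ⟨τ, hτ, hτj₀⟩ := exists_injective_forall_ne (n := d + 1) hβ j₀
  obtain ⟨ε₁, hε₁, hstable⟩ :=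
    (hp.affineIndependent_comp (Sum.inl_injective.comp hσ)).exists_pos_forall_norm_sub_lt
  refine ⟨min ε₀ ε₁, lt_min hε₀ hε₁, fun q hpq hclose =>
    hrigid q ?_ fun v => (hclose v).trans_le (min_le_left _ _)⟩
  have hedge : ∀ i j, i ≠ i₀ ∨ j ≠ j₀ →
      ‖p (Sum.inl i) - p (Sum.inr j)‖ = ‖q (Sum.inl i) - q (Sum.inr j)‖ :=
    fun i j hij => hpq _ _ (by simpa [or_iff_not_imp_left] using hij)
  refine hpq.of_deleteEdges (norm_sub_eq_of_affineSpan_eq_top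
    (x := p ∘ Sum.inl ∘ σ) (y' := q ∘ Sum.inr ∘ τ) ?_ ?_
    (fun k m => hedge _ _ (.inl (hσi₀ k))) (fun k => hedge _ _ (.inl (hσi₀ k)))
    (fun m => hedge _ _ (.inr (hτj₀ m))))
  · exact (hstable (q ∘ Sum.inl ∘ σ) fun k =>
      (hclose _).trans_le (min_le_right _ _)).affineSpan_eq_top_of_euclideanSpace
  · exact (hp.affineIndependent_comp
      (Sum.inr_injective.comp hτ)).affineSpan_eq_top_of_euclideanSpace

/-- Corollary: if `a, b ≥ d+2` and `K_{a,b}` is generically locally rigid in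
`ℝ^d`, then `K_{a,b}` is generically redundantly rigid in `ℝ^d`. -/
theorem bipartite_GLR_implies_GRR (d a b : ℕ) (ha : d + 2 ≤ a) (hb : d + 2 ≤ b)
    (hGLR : GLR d (completeBipartiteGraph (Fin a) (Fin b))) :
    GRR d (completeBipartiteGraph (Fin a) (Fin b)) := by
  intro e he
  induction e using Sym2.ind with
  | _ x y =>
    have hdel :=
      GLR.deleteEdges_completeBipartiteGraph (by simpa using ha) (by simpa using hb) hGLR
    rcases x with i | j <;> rcases y with i' | j' <;> simp [completeBipartiteGraph] at he
    · exact hdel i j'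
    · rw [Sym2.eq_swap]
      exact hdel i' j

end
end

section
/- Let A be a symmetric d×d real matrix, c ∈ ℝ^d, and D ∈ ℝ. Let G + H be a joined graph and p a configuration of G + H in ℝ^d such that every point p v lies on the quadric, i.e., (p v)ᵀ A (p v) + 2⟨c, p v⟩ + D = 0 for all vertices v. Define the quadric flex p' by p' v = A (p v) + c for v ∈ V_G and p' v = −(A (p v) + c) for v ∈ V_H. Then for every g ∈ V_G and h ∈ V_H, ⟨p g − p h, p' g − p' h⟩ = 0; that is, the quadric flex infinitesimally preserves the length of every non-extraneous (cross) edge of G + H. -/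
open scoped Classical

noncomputable section

/-! For a symmetric operator `T`, put `q z = ⟪z, T z⟫ + 2⟪c, z⟫`. Expanding
`⟪x - y, (T x + c) + (T y + c)⟫` the cross terms `⟪x, T y⟫` and `⟪y, T x⟫` cancel, leaving
`q x - q y`; on the quadric `q = -D`, so this vanishes. -/

theorem inner_sub_add_eq_sub_of_isSymmetric {E : Type*} [NormedAddCommGroup E]
    [InnerProductSpace ℝ E] {T : E →ₗ[ℝ] E} (hT : T.IsSymmetric) (c x y : E) :
    inner ℝ (x - y) ((T x + c) + (T y + c)) =
      (inner ℝ x (T x) + 2 * inner ℝ c x) - (inner ℝ y (T y) + 2 * inner ℝ c y) := by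
  have hcross : inner ℝ y (T x) = inner ℝ x (T y) := by rw [← hT, real_inner_comm]
  simp only [inner_sub_left, inner_add_right, real_inner_comm x c, real_inner_comm y c, hcross]
  ring

theorem Matrix.IsSymm.isSymmetric_toEuclideanLin {n : Type*} [Fintype n] [DecidableEq n]
    {A : Matrix n n ℝ} (hA : A.IsSymm) : A.toEuclideanLin.IsSymmetric :=
  Matrix.isSymmetric_toEuclideanLin_iff.mpr (Matrix.isHermitian_iff_isSymm.mpr hA)

theorem matApply_eq_toEuclideanLin {d : ℕ} (A : Matrix (Fin d) (Fin d) ℝ)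
    (x : EuclideanSpace ℝ (Fin d)) : matApply A x = A.toEuclideanLin x := by
  ext i
  simp [matApply, Matrix.toEuclideanLin, Matrix.mulVec, dotProduct]

theorem onQuadric_iff_inner {d : ℕ} (A : Matrix (Fin d) (Fin d) ℝ)
    (c : EuclideanSpace ℝ (Fin d)) (D : ℝ) (x : EuclideanSpace ℝ (Fin d)) :
    OnQuadric A c D x ↔ inner ℝ x (A.toEuclideanLin x) + 2 * inner ℝ c x + D = 0 := by
  simp [OnQuadric, PiLp.inner_apply, Matrix.toEuclideanLin, Matrix.mulVec, dotProduct,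
    Finset.mul_sum, mul_assoc, mul_comm, mul_left_comm]

theorem quadric_flex_preserves_cross_edges_general {α β : Type*} (d : ℕ)
    (A : Matrix (Fin d) (Fin d) ℝ) (hA : A.IsSymm)
    (c : EuclideanSpace ℝ (Fin d)) (D : ℝ)
    (p : α ⊕ β → EuclideanSpace ℝ (Fin d))
    (hq : ∀ v, OnQuadric A c D (p v))
    (p' : α ⊕ β → EuclideanSpace ℝ (Fin d))
    (hpl : ∀ a : α, p' (Sum.inl a) = matApply A (p (Sum.inl a)) + c)
    (hpr : ∀ b : β, p' (Sum.inr b) = -(matApply A (p (Sum.inr b)) + c)) :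
    ∀ (g : α) (h : β),
      inner ℝ (p (Sum.inl g) - p (Sum.inr h)) (p' (Sum.inl g) - p' (Sum.inr h)) = (0 : ℝ) := by
  intro g h
  rw [hpl, hpr, sub_neg_eq_add, matApply_eq_toEuclideanLin, matApply_eq_toEuclideanLin,
    inner_sub_add_eq_sub_of_isSymmetric hA.isSymmetric_toEuclideanLin]
  have hg := (onQuadric_iff_inner A c D _).mp (hq (Sum.inl g))
  have hh := (onQuadric_iff_inner A c D _).mp (hq (Sum.inr h))
  linarith

/-- The quadric flex preserves all non-extraneous (cross) edges of a joined
framework whose points all lie on the quadric `(A, c, D)`. -/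
theorem quadric_flex_preserves_cross_edges {α β : Type*} (d : ℕ)
    (A : Matrix (Fin d) (Fin d) ℝ) (hA : A.IsSymm)
    (c : EuclideanSpace ℝ (Fin d)) (D : ℝ)
    (G : SimpleGraph α) (H : SimpleGraph β)
    (p : α ⊕ β → EuclideanSpace ℝ (Fin d))
    (hq : ∀ v, OnQuadric A c D (p v))
    (p' : α ⊕ β → EuclideanSpace ℝ (Fin d))
    (hpl : ∀ a : α, p' (Sum.inl a) = matApply A (p (Sum.inl a)) + c)
    (hpr : ∀ b : β, p' (Sum.inr b) = -(matApply A (p (Sum.inr b)) + c)) :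
    ∀ (g : α) (h : β),
      inner ℝ (p (Sum.inl g) - p (Sum.inr h)) (p' (Sum.inl g) - p' (Sum.inr h)) = (0 : ℝ) :=
  quadric_flex_preserves_cross_edges_general d A hA c D p hq p' hpl hpr

end
end

section
/- Let G and G' be finite simple graphs on the same vertex set V with E_{G'} ⊆ E_G (G' is a factor of G), and suppose both G and G' are generically almost-globally rigid in ℝ^d. Then every graph G'' on the vertex set V with E_{G'} ⊆ E_{G''} ⊆ E_G is also generically almost-globally rigid in ℝ^d. -/
open scoped Classical

noncomputable section

/-- Generic almost-global rigidity: `(d+1)`-connected and generically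
redundantly rigid in `ℝ^d`, but not generically globally rigid in `ℝ^d`. -/
def GAGR (d : ℕ) {V : Type*} [Fintype V] (G : SimpleGraph V) : Prop :=
  KConnected (d + 1) G ∧ GRR d G ∧ ¬ GGR d G

section

variable {d : ℕ} {V : Type*} {G H : SimpleGraph V}

lemma Equivalent.anti (hGH : G ≤ H) {p q : V → EuclideanSpace ℝ (Fin d)}
    (hpq : Equivalent H p q) : Equivalent G p q :=
  fun u v huv => hpq u v (hGH huv)

lemma GLR.mono (hGH : G ≤ H) (hG : GLR d G) : GLR d H := fun p hp =>
  let ⟨ε, hε, hrigid⟩ := hG p hp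
  ⟨ε, hε, fun q hpq hclose => hrigid q (hpq.anti hGH) hclose⟩

lemma GGR.mono (hGH : G ≤ H) (hG : GGR d G) : GGR d H :=
  fun p hp q hpq => hG p hp q (hpq.anti hGH)

lemma GRR.glr {e : Sym2 V} (hG : GRR d G) (he : e ∈ G.edgeSet) : GLR d G :=
  (hG e he).mono (G.deleteEdges_le _)

/-- When the deleted edge `e` of `H` is not an edge of `G`, already `G ≤ H.deleteEdges {e}`. -/
lemma GRR.mono (hGH : G ≤ H) (hG : GRR d G) (hGLR : GLR d G) : GRR d H := by
  intro e _
  by_cases heG : e ∈ G.edgeSet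
  · exact (hG e heG).mono (SimpleGraph.deleteEdges_mono hGH)
  · have hGe : G.deleteEdges {e} = G :=
      SimpleGraph.deleteEdges_eq_self.2 (Set.disjoint_singleton_right.2 heG)
    exact hGLR.mono (hGe ▸ SimpleGraph.deleteEdges_mono hGH)

lemma KConnected.mono {k : ℕ} [Fintype V] (hGH : G ≤ H) (hG : KConnected k G) :
    KConnected k H :=
  ⟨hG.1, fun S hS => (hG.2 S hS).mono (SimpleGraph.comap_monotone _ hGH)⟩

lemma KConnected.exists_adj {k : ℕ} [Fintype V]
    (hG : KConnected (k + 1) G) : ∃ u v, G.Adj u v := by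
  obtain ⟨a, b, hab⟩ := Fintype.exists_pair_of_one_lt_card (α := V) (by have := hG.1; omega)
  obtain ⟨w⟩ := (hG.2 ∅ (by simp)).preconnected ⟨a, by simp⟩ ⟨b, by simp⟩
  exact ⟨a, _, w.adj_snd (w.not_nil_of_ne (by simpa using hab))⟩

end

theorem GAGR_sandwich_general {V : Type*} [Fintype V] (d : ℕ) (G G' G'' : SimpleGraph V)
    (h2 : G' ≤ G'') (h3 : G'' ≤ G)
    (hG : GAGR d G) (hG' : GAGR d G') : GAGR d G'' := by
  obtain ⟨hconn', hGRR', -⟩ := hG'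
  obtain ⟨u, v, huv⟩ := hconn'.exists_adj
  exact ⟨hconn'.mono h2, hGRR'.mono h2 (hGRR'.glr (e := s(u, v)) huv),
    fun hGGR => hG.2.2 (hGGR.mono h3)⟩

/-- Proposition: if `G' ≤ G` are both generically almost-globally rigid in
`ℝ^d`, then so is every graph `G''` with `G' ≤ G'' ≤ G`. -/
theorem GAGR_sandwich {V : Type*} [Fintype V] (d : ℕ) (G G' G'' : SimpleGraph V)
    (h1 : G' ≤ G) (h2 : G' ≤ G'') (h3 : G'' ≤ G)
    (hG : GAGR d G) (hG' : GAGR d G') : GAGR d G'' :=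
  GAGR_sandwich_general d G G' G'' h2 h3 hG hG'

end
end
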